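/- arXiv:2502.08019 — 2 statements merged into one kernel-verified Lean document; each statement's English description precedes it below -/
import Mathlib

section
/- If a disk of radius r > 0 in the tangent plane is the stereographic projection of a spherical cap of central angle γ₀ on the sphere of radius r_e (cap not containing the North Pole), then 0 < γ₀ ≤ 2 arctan(r/(2r_e)), with equality exactly when the cap is centered at the South Pole. -/
open Real

/-- If a disk of radius `r > 0` in the tangent plane is the stereographic projection of a
spherical cap of central angle `γ₀ ∈ (0, π/2)` whose center makes angle `ψ ∈ [0, π − γ₀)`
with the South Pole (so the cap does not contain the North Pole), i.e.
`r = r_e (tan((ψ + γ₀)/2) − tan((ψ − γ₀)/2))`, then `0 < γ₀ ≤ 2 arctan(r/(2r_e))`, with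
equality precisely when the cap is centered at the South Pole (`ψ = 0`). -/
theorem cap_angle_bound (r_e γ₀ ψ r : ℝ) (hre : 0 < r_e) (hr : 0 < r)
    (hγ₀ : γ₀ ∈ Set.Ioo 0 (π / 2)) (hψ : ψ ∈ Set.Ico (0 : ℝ) (π - γ₀))
    (hproj : r = r_e * (Real.tan ((ψ + γ₀) / 2) - Real.tan ((ψ - γ₀) / 2))) :
    0 < γ₀ ∧ γ₀ ≤ 2 * Real.arctan (r / (2 * r_e)) ∧
    (γ₀ = 2 * Real.arctan (r / (2 * r_e)) ↔ ψ = 0) := by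
  obtain ⟨hγ1, hγ2⟩ := hγ₀
  obtain ⟨hψ1, hψ2⟩ := hψ
  have hπ := Real.pi_pos
  set a := (ψ + γ₀) / 2 with ha
  set b := (ψ - γ₀) / 2 with hb
  have hca : 0 < Real.cos a :=
    Real.cos_pos_of_mem_Ioo ⟨by rw [ha]; linarith, by rw [ha]; linarith⟩
  have hcb : 0 < Real.cos b :=
    Real.cos_pos_of_mem_Ioo ⟨by rw [hb]; linarith, by rw [hb]; linarith⟩
  have hcψ : -Real.cos γ₀ < Real.cos ψ := by
    have h := Real.cos_lt_cos_of_nonneg_of_le_pi hψ1 (by linarith : π - γ₀ ≤ π) hψ2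
    rwa [Real.cos_pi_sub] at h
  set D := Real.cos γ₀ + Real.cos ψ with hDdef
  have hD : 0 < D := by rw [hDdef]; linarith
  have hD1 : D ≤ 1 + Real.cos γ₀ := by
    have := Real.cos_le_one ψ; rw [hDdef]; linarith
  have hcos1 : ψ ≠ 0 → Real.cos ψ < 1 := by
    intro h0
    have h := Real.cos_lt_cos_of_nonneg_of_le_pi (le_refl (0:ℝ)) (by linarith : ψ ≤ π)
      (lt_of_le_of_ne hψ1 (Ne.symm h0))
    simpa using h
  have hs : 0 < Real.sin γ₀ := Real.sin_pos_of_pos_of_lt_pi hγ1 (by linarith)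
  have htan : Real.tan a - Real.tan b = Real.sin γ₀ / (Real.cos a * Real.cos b) := by
    rw [Real.tan_eq_sin_div_cos, Real.tan_eq_sin_div_cos]
    have hg : γ₀ = a - b := by rw [ha, hb]; ring
    rw [hg, Real.sin_sub]
    field_simp
  have hprod : Real.cos a * Real.cos b = D / 2 := by
    have h1 : ψ = a + b := by rw [ha, hb]; ring
    have h2 : γ₀ = a - b := by rw [ha, hb]; ring
    rw [hDdef, h1, h2, Real.cos_add, Real.cos_sub]; ring
  have hteq : r / (2 * r_e) = Real.sin γ₀ / D := by
    rw [hproj, htan, hprod]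
    field_simp
  have hc2 : 0 < Real.cos (γ₀ / 2) :=
    Real.cos_pos_of_mem_Ioo ⟨by linarith, by linarith⟩
  have hsin2 : Real.sin γ₀ = 2 * Real.sin (γ₀ / 2) * Real.cos (γ₀ / 2) := by
    have h := Real.sin_two_mul (γ₀ / 2)
    have h2 : 2 * (γ₀ / 2) = γ₀ := by ring
    rw [h2] at h; linarith
  have hcos2 : Real.cos γ₀ = 2 * Real.cos (γ₀ / 2) ^ 2 - 1 := by
    have h := Real.cos_two_mul (γ₀ / 2)
    have h2 : 2 * (γ₀ / 2) = γ₀ := by ring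
    rw [h2] at h; linarith
  have htanh : Real.tan (γ₀ / 2) = Real.sin γ₀ / (1 + Real.cos γ₀) := by
    rw [Real.tan_eq_sin_div_cos, hsin2, hcos2]
    have h1 : (1:ℝ) + (2 * Real.cos (γ₀ / 2) ^ 2 - 1) = 2 * Real.cos (γ₀ / 2) ^ 2 := by ring
    rw [h1]
    field_simp
  have hle : Real.tan (γ₀ / 2) ≤ r / (2 * r_e) := by
    rw [htanh, hteq]
    gcongr
  have harct : Real.arctan (Real.tan (γ₀ / 2)) = γ₀ / 2 :=
    Real.arctan_tan (by linarith) (by linarith)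
  refine ⟨hγ1, ?_, ?_⟩
  · have := Real.arctan_strictMono.monotone hle
    rw [harct] at this
    linarith
  · constructor
    · intro heq
      by_contra h0
      have hDlt : D < 1 + Real.cos γ₀ := by
        have := hcos1 h0; rw [hDdef]; linarith
      have hlt : Real.tan (γ₀ / 2) < r / (2 * r_e) := by
        rw [htanh, hteq]
        gcongr
      have hmono := Real.arctan_strictMono hlt
      rw [harct] at hmono
      linarith
    · intro h0
      subst h0
      have hD0 : D = 1 + Real.cos γ₀ := by rw [hDdef, Real.cos_zero]; ring
      have : r / (2 * r_e) = Real.tan (γ₀ / 2) := by rw [hteq, hD0, htanh]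
      rw [this, harct]
      ring
end

section
/- For γ ∈ (0, π/2), setting m = ⌈π/γ⌉ and n = ⌈π / arccos(cos γ / cos(π/(2m)))⌉ + 1, the angle ζ = arccos(cos(π/(2m)) · cos(π/n)) satisfies ζ < γ. -/
open Real

/-- For `γ ∈ (0, π/2)`, with `m = ⌈π/γ⌉` and `n = ⌈π / arccos(cos γ / cos(π/(2m)))⌉ + 1`,
the central angle `ζ = arccos(cos(π/(2m)) · cos(π/n))` of the smallest spherical cap
containing each piece of the full-coverage construction satisfies `ζ < γ`. -/
theorem cap_angle_lt_coverage (γ : ℝ) (hγ0 : 0 < γ) (hγ : γ < π / 2)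
    (m n : ℕ) (hm : m = ⌈π / γ⌉₊)
    (hn : n = ⌈π / Real.arccos (Real.cos γ / Real.cos (π / (2 * (m : ℝ))))⌉₊ + 1) :
    Real.arccos (Real.cos (π / (2 * (m : ℝ))) * Real.cos (π / (n : ℝ))) < γ := by
  have hπ := Real.pi_pos
  have hm1 : 1 ≤ m := by
    rw [hm]
    exact Nat.one_le_ceil_iff.mpr (div_pos hπ hγ0)
  have hmpos : (0:ℝ) < (m:ℝ) := by exact_mod_cast Nat.lt_of_lt_of_le Nat.zero_lt_one hm1
  -- π/(2m) ≤ γ/2 < γ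
  have hmge : π / γ ≤ (m:ℝ) := by rw [hm]; exact Nat.le_ceil _
  have hπm : π / (2 * (m:ℝ)) ≤ γ / 2 := by
    rw [div_le_div_iff₀ (by positivity) (by norm_num)]
    have : π ≤ γ * m := by
      rw [div_le_iff₀ hγ0] at hmge; linarith [hmge]
    nlinarith
  have hπm0 : 0 < π / (2 * (m:ℝ)) := by positivity
  have hπmγ : π / (2 * (m:ℝ)) < γ := lt_of_le_of_lt hπm (by linarith)
  have hcosm : Real.cos γ < Real.cos (π / (2 * (m:ℝ))) :=
    Real.cos_lt_cos_of_nonneg_of_le_pi (le_of_lt hπm0) (by linarith) hπmγ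
  have hcosγ0 : 0 < Real.cos γ := Real.cos_pos_of_mem_Ioo ⟨by linarith, hγ⟩
  have hcosm0 : 0 < Real.cos (π / (2 * (m:ℝ))) := lt_trans hcosγ0 hcosm
  set q := Real.cos γ / Real.cos (π / (2 * (m:ℝ))) with hq
  have hq0 : 0 < q := div_pos hcosγ0 hcosm0
  have hq1 : q < 1 := (div_lt_one hcosm0).mpr hcosm
  have harcq : 0 < Real.arccos q := Real.arccos_pos.mpr hq1
  -- π/n < arccos q
  have hnge : π / Real.arccos q < (n:ℝ) := by
    rw [hn]
    push_cast
    calc π / Real.arccos q ≤ (⌈π / Real.arccos q⌉₊ : ℝ) := Nat.le_ceil _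
      _ < _ + 1 := by linarith
  have hn0 : (0:ℝ) < (n:ℝ) := lt_trans (by positivity) hnge
  have hπn : π / (n:ℝ) < Real.arccos q := by
    rw [div_lt_iff₀ hn0]
    rw [div_lt_iff₀ harcq] at hnge
    linarith
  have hπn0 : 0 < π / (n:ℝ) := by positivity
  have harcle : Real.arccos q ≤ π := Real.arccos_le_pi q
  have hcosn : Real.cos (Real.arccos q) < Real.cos (π / (n:ℝ)) :=
    Real.cos_lt_cos_of_nonneg_of_le_pi (le_of_lt hπn0) harcle hπn
  rw [Real.cos_arccos (by linarith) (by linarith)] at hcosn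
  have hprod : Real.cos γ < Real.cos (π / (2 * (m:ℝ))) * Real.cos (π / (n:ℝ)) := by
    have : Real.cos (π / (2 * (m:ℝ))) * q < Real.cos (π / (2 * (m:ℝ))) * Real.cos (π / (n:ℝ)) :=
      (mul_lt_mul_iff_right₀ hcosm0).mpr hcosn
    rwa [hq, mul_div_cancel₀ _ (ne_of_gt hcosm0)] at this
  have hcosn1 : Real.cos (π / (n:ℝ)) ≤ 1 := Real.cos_le_one _
  have hcosm1 : Real.cos (π / (2 * (m:ℝ))) ≤ 1 := Real.cos_le_one _
  have hprodmem : Real.cos (π / (2 * (m:ℝ))) * Real.cos (π / (n:ℝ)) ∈ Set.Icc (-1:ℝ) 1 := by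
    constructor
    · nlinarith
    · nlinarith
  have := Real.strictAntiOn_arccos
    ⟨by linarith [Real.neg_one_le_cos γ], by linarith [Real.cos_le_one γ]⟩ hprodmem hprod
  rwa [Real.arccos_cos (by linarith) (by linarith)] at this
end
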